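/- Let α > −1 and 1 < q < p < ∞. Let ω be a weight on the upper half-plane H belonging to 𝔹_{∞,α}, let μ be a positive Borel measure on H, and let Φ be a normalized Young function in the class B_p. Assume that the function K_μ(z) = sup_{I : z ∈ Q_I} μ(Q_I)/|Q_I|_{ω,α} belongs to L^s(H, ω dV_α), where s = p/(p−q). Then there is a constant C > 0 such that for every β ∈ {0, 1/3} and every compactly supported f ∈ L^p(H, ω dV_α), (∫_H (M^{d,β}_{Φ,ω,α} f(z))^q dμ(z))^{1/q} ≤ C (∫_H |f(z)|^p ω(z) dV_α(z))^{1/p}. -/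

import Mathlib

/-!
Since `3β ∈ ℤ`, two intervals of `D^β` are nested or disjoint, so for bounded scales a union of
dyadic Carleson boxes is the disjoint union of its maximal boxes, and box-wise bounds
`ρ(Q) ≤ ∫_Q g` pass to the level sets `{M f > 2^k}`. On a box where the Luxemburg norm of `f`
exceeds `2^k`, the definition of `K_μ` gives `μ(Q) ≤ ∫_Q K_μ ω dV_α`, and convexity of `Φ` lets one
discard the values `|f| ≤ 2^(k-1)`: `|Q|_{ω,α} ≤ ∫_Q Φ(|f| χ_{|f| > 2^(k-1)} / 2^(k-1)) ω dV_α`.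
Summing over `k` yields `∫ (M f)^q dμ ≲ ∫ (M f)^q K_μ ω dV_α`, and, since the shells
`(|f|/2^(k-1), |f|/2^(k-2)]` are disjoint subsets of `(1, ∞)`, the `B_p` condition yields
`∫ (M f)^p ω dV_α ≲ ∫ |f|^p ω dV_α`. Hölder's inequality with exponents `p/q` and
`s = p/(p-q)` joins the two estimates.
-/

open MeasureTheory Set Filter
open scoped ENNReal NNReal

noncomputable section

/-- The upper half-plane `H = {z : 0 < Im z}`. -/
def UHP : Set ℂ := {z : ℂ | 0 < z.im}

/-- The measure `dV_α = y^α dx dy` supported on the upper half-plane. -/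
def Vm (α : ℝ) : Measure ℂ :=
  MeasureTheory.volume.withDensity
    (fun z => if 0 < z.im then ENNReal.ofReal (z.im ^ α) else 0)

/-- The Carleson square `Q_I` attached to the interval `I = (a, b)`. -/
def Qbox (a b : ℝ) : Set ℂ :=
  {z : ℂ | z.re ∈ Set.Ioo a b ∧ z.im ∈ Set.Ioo 0 (b - a)}

/-- The weighted measure `|E|_{ω,α} = ∫_E ω dV_α` of a set `E`. -/
def wvol (α : ℝ) (ω : ℂ → ℝ) (E : Set ℂ) : ℝ≥0∞ :=
  ∫⁻ z in E, ENNReal.ofReal (ω z) ∂(Vm α)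

/-- A weight: a nonnegative locally integrable function on the upper half-plane. -/
def IsWeight (α : ℝ) (ω : ℂ → ℝ) : Prop :=
  Measurable ω ∧ (∀ z, 0 ≤ ω z) ∧ MeasureTheory.LocallyIntegrableOn ω UHP (Vm α)

/-- A normalized Young function: continuous, convex, increasing on `[0,∞)`,
with `Φ 0 = 0`, `Φ 1 = 1` and `Φ t → ∞` as `t → ∞`. -/
structure IsNormalizedYoung (Φ : ℝ → ℝ) : Prop where
  cont : ContinuousOn Φ (Set.Ici 0)
  convex : ConvexOn ℝ (Set.Ici 0) Φ
  mono : MonotoneOn Φ (Set.Ici 0)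
  map_zero : Φ 0 = 0
  map_one : Φ 1 = 1
  tendsto_atTop : Filter.Tendsto Φ Filter.atTop Filter.atTop

/-- The `Δ₂` (doubling) condition with constant `K`. -/
def Delta2 (Φ : ℝ → ℝ) (K : ℝ) : Prop :=
  1 < K ∧ ∀ t : ℝ, 0 ≤ t → Φ (2 * t) ≤ K * Φ t

/-- The class `B_p`: `Δ₂` together with `∫_c^∞ Φ(t)/t^p dt/t < ∞` for some `c > 0`. -/
def InBp (Φ : ℝ → ℝ) (p : ℝ) : Prop :=
  (∃ K : ℝ, Delta2 Φ K) ∧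
    ∃ c : ℝ, 0 < c ∧ (∫⁻ t in Set.Ioi c, ENNReal.ofReal (Φ t / t ^ (p + 1))) < ⊤

/-- The Luxemburg norm `‖f‖_{Q_I, Φ, ω, α}` over the Carleson square of `I = (a,b)`. -/
def luxNorm (α : ℝ) (Φ : ℝ → ℝ) (ω : ℂ → ℝ) (a b : ℝ) (f : ℂ → ℂ) : ℝ≥0∞ :=
  ⨅ (t : ℝ) (_ : 0 < t)
    (_ : (∫⁻ z in Qbox a b, ENNReal.ofReal (Φ (‖f z‖ / t) * ω z) ∂(Vm α)) /
          wvol α ω (Qbox a b) ≤ 1),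
    ENNReal.ofReal t

/-- The maximal function `M_{Φ,ω,α} f`. -/
def maxFn (α : ℝ) (Φ : ℝ → ℝ) (ω : ℂ → ℝ) (f : ℂ → ℂ) (z : ℂ) : ℝ≥0∞ :=
  ⨆ (a : ℝ) (b : ℝ) (_ : z ∈ Qbox a b), luxNorm α Φ ω a b f

/-- The dyadic grid `D^β`, as a set of pairs of endpoints. -/
def dyadicGrid (β : ℝ) : Set (ℝ × ℝ) :=
  {I : ℝ × ℝ | ∃ j m : ℤ, I.1 = (2 : ℝ) ^ j * (m + (-1 : ℝ) ^ j * β) ∧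
    I.2 = (2 : ℝ) ^ j * (m + 1 + (-1 : ℝ) ^ j * β)}

/-- The dyadic maximal function `M^{d,β}_{Φ,ω,α} f`. -/
def dyadicMax (β α : ℝ) (Φ : ℝ → ℝ) (ω : ℂ → ℝ) (f : ℂ → ℂ) (z : ℂ) : ℝ≥0∞ :=
  ⨆ (I : ℝ × ℝ) (_ : I ∈ dyadicGrid β) (_ : z ∈ Qbox I.1 I.2),
    luxNorm α Φ ω I.1 I.2 f

/-- The Hardy–Littlewood maximal function `M_α g` of the upper half-plane. -/
def hlMax (α : ℝ) (g : ℂ → ℝ) (z : ℂ) : ℝ≥0∞ :=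
  ⨆ (a : ℝ) (b : ℝ) (_ : z ∈ Qbox a b),
    (∫⁻ w in Qbox a b, ENNReal.ofReal |g w| ∂(Vm α)) / Vm α (Qbox a b)

/-- The weighted Hardy–Littlewood maximal function `M_{ω,α} f`. -/
def whlMax (α : ℝ) (ω : ℂ → ℝ) (f : ℂ → ℂ) (z : ℂ) : ℝ≥0∞ :=
  ⨆ (a : ℝ) (b : ℝ) (_ : z ∈ Qbox a b),
    (∫⁻ w in Qbox a b, ENNReal.ofReal (‖f w‖ * ω w) ∂(Vm α)) /
      wvol α ω (Qbox a b)

/-- The Békollè–Bonami constant `[ω]_{B_{p,α}}`. -/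
def BBnorm (α p : ℝ) (ω : ℂ → ℝ) : ℝ≥0∞ :=
  ⨆ (a : ℝ) (b : ℝ) (_ : a < b),
    (wvol α ω (Qbox a b) / Vm α (Qbox a b)) *
      ((∫⁻ z in Qbox a b, ENNReal.ofReal (ω z) ^ (1 - p / (p - 1)) ∂(Vm α)) /
          Vm α (Qbox a b)) ^ (p - 1)

/-- Membership in the Békollè–Bonami class `B_{p,α}`. -/
def InBB (α p : ℝ) (ω : ℂ → ℝ) : Prop := BBnorm α p ω < ⊤

/-- Membership in `𝔹_{∞,α} = ⋃_{p>1} B_{p,α}`. -/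
def InBBinfty (α : ℝ) (ω : ℂ → ℝ) : Prop := ∃ p : ℝ, 1 < p ∧ InBB α p ω

/-- The quantity `∫_H |f|^p ω dV_α`. -/
def lpInt (α p : ℝ) (ω : ℂ → ℝ) (f : ℂ → ℂ) : ℝ≥0∞ :=
  ∫⁻ z, ENNReal.ofReal (‖f z‖) ^ p * ENNReal.ofReal (ω z) ∂(Vm α)

/-- The function `K_μ(z) = sup_{I : z ∈ Q_I} μ(Q_I)/|Q_I|_{ω,α}`. -/
def Kmu (α : ℝ) (ω : ℂ → ℝ) (μ : Measure ℂ) (z : ℂ) : ℝ≥0∞ :=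
  ⨆ (a : ℝ) (b : ℝ) (_ : z ∈ Qbox a b), μ (Qbox a b) / wvol α ω (Qbox a b)

/-- `ω` is `α`-doubling with doubling function `φ` and constant `K`. -/
structure AlphaDoubling (α : ℝ) (ω : ℂ → ℝ) (φ : ℝ≥0∞ → ℝ≥0∞) (K : ℝ≥0∞) : Prop where
  mono : Monotone φ
  map_one : φ 1 = 1
  one_le : 1 ≤ K
  bound : ∀ a b : ℝ, ∀ E ⊆ Qbox a b, MeasurableSet E →
    wvol α ω (Qbox a b) / wvol α ω E ≤ K * φ (Vm α (Qbox a b) / Vm α E)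

/-- The complementary (conjugate) Young function `Ψ(s) = sup_{t ≥ 0} (t s − Φ(t))`,
valued in `ℝ≥0∞`. -/
def conjugateYoung (Φ : ℝ → ℝ) (s : ℝ) : ℝ≥0∞ :=
  ⨆ (t : ℝ) (_ : 0 ≤ t), ENNReal.ofReal (t * s - Φ t)

/-- The unweighted Luxemburg norm for an `ℝ≥0∞`-valued Young function. -/
def luxNormE (α : ℝ) (Ψ : ℝ → ℝ≥0∞) (a b : ℝ) (g : ℂ → ℝ) : ℝ≥0∞ :=
  ⨅ (t : ℝ) (_ : 0 < t)
    (_ : (∫⁻ z in Qbox a b, Ψ (|g z| / t) ∂(Vm α)) / Vm α (Qbox a b) ≤ 1),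
    ENNReal.ofReal t

/-- The Békollè–Bonami `B_{∞,α}` constant
`[ω]_{B_{∞,α}} = sup_I |Q_I|_{ω,α}⁻¹ ∫_{Q_I} M_α(ω χ_{Q_I}) dV_α`. -/
def BBinftyNorm (α : ℝ) (ω : ℂ → ℝ) : ℝ≥0∞ :=
  ⨆ (a : ℝ) (b : ℝ) (_ : a < b),
    (∫⁻ z in Qbox a b, hlMax α ((Qbox a b).indicator ω) z ∂(Vm α)) /
      wvol α ω (Qbox a b)

end

noncomputable section

section DyadicGrid

variable {β : ℝ}

def dyadicLeft (β : ℝ) (j m : ℤ) : ℝ := (2 : ℝ) ^ j * (m + (-1 : ℝ) ^ j * β)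

def dyadicRight (β : ℝ) (j m : ℤ) : ℝ := dyadicLeft β j m + (2 : ℝ) ^ j

/-- The Carleson box over the interval of `D^β` with scale `P.1` and position `P.2`. -/
def dyadicBox (β : ℝ) (P : ℤ × ℤ) : Set ℂ :=
  Qbox (dyadicLeft β P.1 P.2) (dyadicRight β P.1 P.2)

def DyadicSubset (β : ℝ) (P Q : ℤ × ℤ) : Prop :=
  dyadicLeft β Q.1 Q.2 ≤ dyadicLeft β P.1 P.2 ∧ dyadicRight β P.1 P.2 ≤ dyadicRight β Q.1 Q.2

lemma dyadicLeft_mono {j m m' : ℤ} (h : m ≤ m') : dyadicLeft β j m ≤ dyadicLeft β j m' := by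
  unfold dyadicLeft
  gcongr

lemma dyadicRight_eq_dyadicLeft_add_one (j m : ℤ) :
    dyadicRight β j m = dyadicLeft β j (m + 1) := by
  unfold dyadicRight dyadicLeft; push_cast; ring

lemma dyadicGrid_eq_range (β : ℝ) :
    dyadicGrid β = range fun P : ℤ × ℤ => (dyadicLeft β P.1 P.2, dyadicRight β P.1 P.2) := by
  ext ⟨a, b⟩
  simp only [dyadicGrid, dyadicRight, dyadicLeft, mem_ofPred_eq, mem_range, Prod.exists,
    Prod.mk.injEq]
  refine exists₂_congr fun j m => ?_
  constructor <;> rintro ⟨rfl, rfl⟩ <;> constructor <;> ring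

/-- The nesting property of `D^β` needs `3β ∈ ℤ`: the left endpoints at scale `j + 1` are then
left endpoints at scale `j`. -/
lemma exists_dyadicSubset_succ (hβ : ∃ d : ℤ, (d : ℝ) = 3 * β) (j m : ℤ) :
    ∃ m' : ℤ, DyadicSubset β (j, m) (j + 1, m') := by
  obtain ⟨d, hd⟩ := hβ
  have hsign : (-1 : ℝ) ^ (j + 1) = -(-1) ^ j := by
    rw [zpow_add_one₀ (by norm_num)]; ring
  obtain ⟨e, he⟩ : ∃ e : ℤ, (e : ℝ) = 3 * (-1) ^ j * β := by
    rcases Int.even_or_odd j with h | h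
    · exact ⟨d, by rw [h.neg_one_zpow, hd]; ring⟩
    · exact ⟨-d, by rw [h.neg_one_zpow]; push_cast; rw [hd]; ring⟩
  have h2 : (2 : ℝ) ^ (j + 1) = 2 * 2 ^ j := by rw [zpow_add_one₀ (by norm_num)]; ring
  have hpos : (0 : ℝ) < 2 ^ j := zpow_pos two_pos j
  refine ⟨(m + e) / 2, ?_, ?_⟩
  · have : 2 * (((m + e) / 2 : ℤ) : ℝ) ≤ m + e := by
      exact_mod_cast (by omega : 2 * ((m + e) / 2) ≤ m + e)
    simp only [dyadicLeft, hsign, h2]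
    nlinarith
  · have : (m : ℝ) + e ≤ 2 * (((m + e) / 2 : ℤ) : ℝ) + 1 := by
      exact_mod_cast (by omega : m + e ≤ 2 * ((m + e) / 2) + 1)
    simp only [dyadicRight, dyadicLeft, hsign, h2]
    nlinarith

lemma DyadicSubset.trans {P Q R : ℤ × ℤ} (hPQ : DyadicSubset β P Q) (hQR : DyadicSubset β Q R) :
    DyadicSubset β P R :=
  ⟨hQR.1.trans hPQ.1, hPQ.2.trans hQR.2⟩

lemma dyadicSubset_or_disjoint (hβ : ∃ d : ℤ, (d : ℝ) = 3 * β) {P Q : ℤ × ℤ} (h : P.1 ≤ Q.1) :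
    DyadicSubset β P Q ∨ dyadicRight β P.1 P.2 ≤ dyadicLeft β Q.1 Q.2 ∨
      dyadicRight β Q.1 Q.2 ≤ dyadicLeft β P.1 P.2 := by
  obtain ⟨j, m⟩ := P
  obtain ⟨k, n⟩ := Q
  dsimp only at h ⊢
  induction j, h using Int.leInductionDown generalizing m with
  | base =>
    rcases lt_trichotomy m n with hmn | rfl | hmn
    · exact Or.inr <| Or.inl <| dyadicRight_eq_dyadicLeft_add_one (β := β) k m ▸
        dyadicLeft_mono (by omega)
    · exact Or.inl ⟨le_rfl, le_rfl⟩
    · exact Or.inr <| Or.inr <| dyadicRight_eq_dyadicLeft_add_one (β := β) k n ▸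
        dyadicLeft_mono (by omega)
  | pred j _ ih =>
    obtain ⟨m', hm'⟩ := exists_dyadicSubset_succ hβ (j - 1) m
    rw [sub_add_cancel] at hm'
    rcases ih m' with h | h | h
    · exact Or.inl (hm'.trans h)
    · exact Or.inr <| Or.inl <| hm'.2.trans h
    · exact Or.inr <| Or.inr <| h.trans hm'.1

end DyadicGrid

section CarlesonBoxes

lemma Qbox_subset_Qbox {a b a' b' : ℝ} (ha : a' ≤ a) (hb : b ≤ b') : Qbox a b ⊆ Qbox a' b' :=
  fun _ ⟨⟨h₁, h₂⟩, h₃, h₄⟩ => ⟨⟨ha.trans_lt h₁, h₂.trans_le hb⟩, h₃, by linarith⟩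

lemma disjoint_Qbox_of_le {a b a' b' : ℝ} (h : b ≤ a') : Disjoint (Qbox a b) (Qbox a' b') :=
  disjoint_left.2 fun _ ⟨⟨_, h₁⟩, _⟩ ⟨⟨h₂, _⟩, _⟩ => by linarith

lemma isOpen_Qbox (a b : ℝ) : IsOpen (Qbox a b) :=
  (isOpen_Ioo.preimage Complex.continuous_re).inter (isOpen_Ioo.preimage Complex.continuous_im)

lemma measurableSet_Qbox (a b : ℝ) : MeasurableSet (Qbox a b) :=
  (isOpen_Qbox a b).measurableSet

end CarlesonBoxes

section DyadicCovering

variable {β : ℝ}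

lemma DyadicSubset.dyadicBox_subset {P Q : ℤ × ℤ} (h : DyadicSubset β P Q) :
    dyadicBox β P ⊆ dyadicBox β Q :=
  Qbox_subset_Qbox h.1 h.2

lemma DyadicSubset.scale_le {P Q : ℤ × ℤ} (h : DyadicSubset β P Q) : P.1 ≤ Q.1 := by
  have : (2 : ℝ) ^ P.1 ≤ 2 ^ Q.1 := by
    have := h.1; have := h.2
    unfold dyadicRight at *
    linarith
  exact (zpow_le_zpow_iff_right₀ one_lt_two).1 this

lemma DyadicSubset.eq_of_scale_le {P Q : ℤ × ℤ} (h : DyadicSubset β P Q) (hs : Q.1 ≤ P.1) :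
    P = Q := by
  have hj : P.1 = Q.1 := le_antisymm h.scale_le hs
  have hleft : dyadicLeft β P.1 P.2 = dyadicLeft β Q.1 Q.2 := by
    obtain ⟨h₁, h₂⟩ := h
    unfold dyadicRight at h₂
    rw [hj] at h₁ h₂ ⊢
    linarith
  unfold dyadicLeft at hleft
  rw [hj, mul_right_inj' (zpow_pos two_pos _).ne'] at hleft
  exact Prod.ext hj (by exact_mod_cast add_right_cancel hleft)

lemma exists_maximal_dyadicSubset {S : Set (ℤ × ℤ)} {N : ℤ} (hN : ∀ P ∈ S, P.1 ≤ N)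
    {P : ℤ × ℤ} (hP : P ∈ S) :
    ∃ Q ∈ S, DyadicSubset β P Q ∧ ∀ R ∈ S, DyadicSubset β Q R → R = Q := by
  obtain ⟨k, ⟨Q, hQ, hPQ, rfl⟩, hmax⟩ :=
    Int.exists_greatest_of_bdd (P := fun k => ∃ Q ∈ S, DyadicSubset β P Q ∧ Q.1 = k)
      ⟨N, fun _ ⟨Q, hQ, _, hk⟩ => hk ▸ hN Q hQ⟩ ⟨P.1, P, hP, ⟨le_rfl, le_rfl⟩, rfl⟩
  refine ⟨Q, hQ, hPQ, fun R hR hQR => (hQR.eq_of_scale_le ?_).symm⟩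
  exact hmax R.1 ⟨R, hR, hPQ.trans hQR, rfl⟩

lemma pairwiseDisjoint_dyadicBox (hβ : ∃ d : ℤ, (d : ℝ) = 3 * β) {M : Set (ℤ × ℤ)}
    (hM : ∀ P ∈ M, ∀ Q ∈ M, DyadicSubset β P Q → P = Q) : M.PairwiseDisjoint (dyadicBox β) := by
  have key : ∀ P ∈ M, ∀ Q ∈ M, P ≠ Q → P.1 ≤ Q.1 → Disjoint (dyadicBox β P) (dyadicBox β Q) := by
    intro P hP Q hQ hne h
    rcases dyadicSubset_or_disjoint hβ h with h | h | h
    · exact absurd (hM P hP Q hQ h) hne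
    · exact disjoint_Qbox_of_le h
    · exact (disjoint_Qbox_of_le h).symm
  intro P hP Q hQ hne
  rcases le_total P.1 Q.1 with h | h
  · exact key P hP Q hQ hne h
  · exact (key Q hQ P hP hne.symm h).symm

variable {ρ m : Measure ℂ} {g : ℂ → ℝ≥0∞}

lemma measure_biUnion_dyadicBox_le_of_scale_le (hβ : ∃ d : ℤ, (d : ℝ) = 3 * β)
    {S : Set (ℤ × ℤ)} {N : ℤ} (hN : ∀ P ∈ S, P.1 ≤ N)
    (hS : ∀ P ∈ S, ρ (dyadicBox β P) ≤ ∫⁻ z in dyadicBox β P, g z ∂m) :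
    ρ (⋃ P ∈ S, dyadicBox β P) ≤ ∫⁻ z in ⋃ P ∈ S, dyadicBox β P, g z ∂m := by
  set M := {Q ∈ S | ∀ R ∈ S, DyadicSubset β Q R → R = Q}
  have hUM : ⋃ P ∈ S, dyadicBox β P = ⋃ Q ∈ M, dyadicBox β Q := by
    refine (iUnion₂_subset fun P hP => ?_).antisymm (biUnion_subset_biUnion_left fun Q hQ => hQ.1)
    obtain ⟨Q, hQ, hPQ, hmax⟩ := exists_maximal_dyadicSubset hN hP
    exact hPQ.dyadicBox_subset.trans (subset_biUnion_of_mem (u := dyadicBox β) ⟨hQ, hmax⟩)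
  have hdisj : M.PairwiseDisjoint (dyadicBox β) :=
    pairwiseDisjoint_dyadicBox hβ fun P hP Q hQ hPQ => (hP.2 Q hQ.1 hPQ).symm
  rw [hUM, lintegral_biUnion (s := dyadicBox β) M.to_countable
    (fun _ _ => measurableSet_Qbox _ _) hdisj]
  exact (measure_biUnion_le ρ M.to_countable _).trans
    (ENNReal.tsum_le_tsum fun Q => hS Q Q.2.1)

lemma measure_biUnion_dyadicBox_le (hβ : ∃ d : ℤ, (d : ℝ) = 3 * β) {S : Set (ℤ × ℤ)}
    (hS : ∀ P ∈ S, ρ (dyadicBox β P) ≤ ∫⁻ z in dyadicBox β P, g z ∂m) :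
    ρ (⋃ P ∈ S, dyadicBox β P) ≤ ∫⁻ z in ⋃ P ∈ S, dyadicBox β P, g z ∂m := by
  set U : ℤ → Set ℂ := fun N => ⋃ P ∈ {P ∈ S | P.1 ≤ N}, dyadicBox β P
  have hU : ⋃ P ∈ S, dyadicBox β P = ⋃ N, U N := by
    refine (iUnion₂_subset fun P hP => ?_).antisymm
      (iUnion_subset fun N => biUnion_subset_biUnion_left fun P hP => hP.1)
    have hP' : P ∈ {R ∈ S | R.1 ≤ P.1} := ⟨hP, le_rfl⟩
    exact (subset_biUnion_of_mem (u := dyadicBox β) hP').trans (subset_iUnion U P.1)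
  have hmono : Monotone U := fun N N' h =>
    biUnion_subset_biUnion_left fun P hP => ⟨hP.1, hP.2.trans h⟩
  rw [hU, hmono.measure_iUnion]
  refine iSup_le fun N => ?_
  refine (measure_biUnion_dyadicBox_le_of_scale_le hβ (fun P hP => hP.2)
    fun P hP => hS P hP.1).trans (lintegral_mono_set (subset_iUnion U N))

end DyadicCovering

namespace IsNormalizedYoung

variable {Φ : ℝ → ℝ}

lemma nonneg (hΦ : IsNormalizedYoung Φ) {t : ℝ} (ht : 0 ≤ t) : 0 ≤ Φ t :=
  hΦ.map_zero ▸ hΦ.mono self_mem_Ici ht ht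

lemma le_self (hΦ : IsNormalizedYoung Φ) {t : ℝ} (h₀ : 0 ≤ t) (h₁ : t ≤ 1) : Φ t ≤ t := by
  have := hΦ.convex.2 (mem_Ici.2 zero_le_one) self_mem_Ici h₀ (sub_nonneg.2 h₁) (by ring)
  simpa [hΦ.map_one, hΦ.map_zero] using this

lemma map_half_le (hΦ : IsNormalizedYoung Φ) {t : ℝ} (ht : 0 ≤ t) : Φ (t / 2) ≤ Φ t / 2 := by
  have := hΦ.convex.2 (mem_Ici.2 ht) self_mem_Ici (by norm_num : (0 : ℝ) ≤ 1 / 2)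
    (by norm_num : (0 : ℝ) ≤ 1 / 2) (by norm_num)
  simp only [smul_eq_mul, mul_zero, add_zero, hΦ.map_zero] at this
  rw [show t / 2 = 1 / 2 * t by ring]
  linarith

lemma map_div_two_mul_le (hΦ : IsNormalizedYoung Φ) {t u : ℝ} (ht : 0 < t) (hu : 0 ≤ u) :
    Φ (u / (2 * t)) ≤ Φ ((if t < u then u else 0) / t) / 2 + 1 / 2 := by
  split_ifs with htu
  · have := hΦ.map_half_le (div_nonneg hu ht.le)
    rw [div_div, mul_comm t 2] at this
    linarith
  · have h₁ : u / (2 * t) ≤ 1 / 2 := by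
      rw [div_le_div_iff₀ (by positivity) two_pos]; linarith
    have := hΦ.le_self (t := u / (2 * t)) (by positivity) (by linarith)
    rw [zero_div, hΦ.map_zero]
    linarith

lemma monotone_comp_max_zero (hΦ : IsNormalizedYoung Φ) : Monotone fun t => Φ (max t 0) :=
  fun _ _ h => hΦ.mono (mem_Ici.2 (le_max_right _ _)) (mem_Ici.2 (le_max_right _ _))
    (max_le_max h le_rfl)

/-- `Φ` is only controlled on `[0, ∞)`, so measurability is obtained through `Φ (max t 0)`. -/
lemma measurable_comp (hΦ : IsNormalizedYoung Φ) {X : Type*} [MeasurableSpace X] {u : X → ℝ}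
    (hu : Measurable u) (h : ∀ x, 0 ≤ u x) : Measurable fun x => Φ (u x) := by
  have := hΦ.monotone_comp_max_zero.measurable.comp hu
  simpa [Function.comp_def, max_eq_left (h _)] using this

lemma measurable_truncation (hΦ : IsNormalizedYoung Φ) {f : ℂ → ℂ} (hf : Measurable f) {t : ℝ}
    (ht : 0 ≤ t) : Measurable fun z => Φ ((if t < ‖f z‖ then ‖f z‖ else 0) / t) := by
  refine hΦ.measurable_comp ?_ fun z => by split_ifs <;> positivity
  exact (Measurable.ite (measurableSet_lt measurable_const hf.norm) hf.norm
    measurable_const).div_const t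

lemma lintegral_Ioi_one_lt_top (hΦ : IsNormalizedYoung Φ) {p : ℝ} (hp : -1 ≤ p) (hΦp : InBp Φ p) :
    ∫⁻ t in Ioi 1, ENNReal.ofReal (Φ t / t ^ (p + 1)) < ⊤ := by
  obtain ⟨-, c, -, hc⟩ := hΦp
  rcases le_or_gt c 1 with hc1 | hc1
  · exact (lintegral_mono_set (Ioi_subset_Ioi hc1)).trans_lt hc
  rw [← Ioc_union_Ioi_eq_Ioi hc1.le, lintegral_union measurableSet_Ioi (Ioc_disjoint_Ioi le_rfl)]
  refine ENNReal.add_lt_top.2 ⟨?_, hc⟩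
  calc ∫⁻ t in Ioc 1 c, ENNReal.ofReal (Φ t / t ^ (p + 1))
      ≤ ∫⁻ _ in Ioc 1 c, ENNReal.ofReal (Φ c) := by
        refine setLIntegral_mono' measurableSet_Ioc fun t ht => ENNReal.ofReal_le_ofReal ?_
        have ht0 : (0 : ℝ) ≤ t := zero_le_one.trans ht.1.le
        calc Φ t / t ^ (p + 1) ≤ Φ t :=
              div_le_self (hΦ.nonneg ht0) (Real.one_le_rpow ht.1.le (by linarith))
          _ ≤ Φ c := hΦ.mono (mem_Ici.2 ht0) (mem_Ici.2 (ht0.trans ht.2)) ht.2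
    _ < ⊤ := by
        rw [setLIntegral_const, Real.volume_Ioc]
        exact ENNReal.mul_lt_top ENNReal.ofReal_lt_top ENNReal.ofReal_lt_top

end IsNormalizedYoung

section Luxemburg

variable {α : ℝ} {Φ : ℝ → ℝ} {ω : ℂ → ℝ} {f : ℂ → ℂ} {a b t : ℝ}

lemma luxNorm_le_ofReal (ht : 0 < t)
    (h : (∫⁻ z in Qbox a b, ENNReal.ofReal (Φ (‖f z‖ / t) * ω z) ∂(Vm α)) /
      wvol α ω (Qbox a b) ≤ 1) :
    luxNorm α Φ ω a b f ≤ ENNReal.ofReal t :=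
  iInf_le_of_le t (iInf_le_of_le ht (iInf_le _ h))

lemma wvol_lt_of_ofReal_lt_luxNorm (hω : IsWeight α ω) (ht : 0 < t)
    (h : ENNReal.ofReal t < luxNorm α Φ ω a b f) :
    wvol α ω (Qbox a b) ≠ 0 ∧ wvol α ω (Qbox a b) ≠ ⊤ ∧
      wvol α ω (Qbox a b) < ∫⁻ z in Qbox a b, ENNReal.ofReal (Φ (‖f z‖ / t) * ω z) ∂(Vm α) := by
  have hnot := fun h' => h.not_ge (luxNorm_le_ofReal ht h')
  have hW0 : wvol α ω (Qbox a b) ≠ 0 := by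
    intro hW0
    have hω0 : ∀ᵐ z ∂(Vm α).restrict (Qbox a b), ω z = 0 := by
      filter_upwards [(lintegral_eq_zero_iff hω.1.ennreal_ofReal).1 hW0] with z hz
      exact le_antisymm (ENNReal.ofReal_eq_zero.1 hz) (hω.2.1 z)
    refine hnot ?_
    rw [lintegral_congr_ae (g := fun _ => 0) (hω0.mono fun z hz => by simp [hz]), lintegral_zero,
      ENNReal.zero_div]
    exact zero_le_one
  have hWtop : wvol α ω (Qbox a b) ≠ ⊤ := fun hWtop => hnot (by simp [hWtop])
  refine ⟨hW0, hWtop, ?_⟩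
  rw [ENNReal.div_le_iff hW0 hWtop, one_mul] at hnot
  exact not_le.1 hnot

lemma wvol_lt_truncation_of_ofReal_two_mul_lt_luxNorm (hω : IsWeight α ω)
    (hΦ : IsNormalizedYoung Φ) (hf : Measurable f) (ht : 0 < t)
    (h : ENNReal.ofReal (2 * t) < luxNorm α Φ ω a b f) :
    wvol α ω (Qbox a b) < ∫⁻ z in Qbox a b,
      ENNReal.ofReal (Φ ((if t < ‖f z‖ then ‖f z‖ else 0) / t) * ω z) ∂(Vm α) := by
  obtain ⟨hW0, hWtop, -⟩ := wvol_lt_of_ofReal_lt_luxNorm hω (by positivity) h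
  set T : ℂ → ℝ≥0∞ := fun z => ENNReal.ofReal (Φ ((if t < ‖f z‖ then ‖f z‖ else 0) / t) * ω z)
  have hT : Measurable T := ((hΦ.measurable_truncation hf ht.le).mul hω.1).ennreal_ofReal
  have hpt : ∀ z, ENNReal.ofReal (Φ (‖f z‖ / (2 * t)) * ω z) ≤
      2⁻¹ * T z + 2⁻¹ * ENNReal.ofReal (ω z) := by
    intro z
    have hw := hω.2.1 z
    have hu : 0 ≤ (if t < ‖f z‖ then ‖f z‖ else 0) / t := by split_ifs <;> positivity
    have hΦu := hΦ.nonneg hu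
    have key := mul_le_mul_of_nonneg_right (hΦ.map_div_two_mul_le ht (norm_nonneg (f z))) hw
    calc ENNReal.ofReal (Φ (‖f z‖ / (2 * t)) * ω z)
        ≤ ENNReal.ofReal (Φ ((if t < ‖f z‖ then ‖f z‖ else 0) / t) * ω z / 2 + ω z / 2) :=
          ENNReal.ofReal_le_ofReal (by linarith)
      _ = 2⁻¹ * T z + 2⁻¹ * ENNReal.ofReal (ω z) := by
          rw [ENNReal.ofReal_add (by positivity) (by positivity),
            ENNReal.ofReal_div_of_pos two_pos, ENNReal.ofReal_div_of_pos two_pos,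
            ENNReal.ofReal_ofNat, ENNReal.div_eq_inv_mul, ENNReal.div_eq_inv_mul]
  by_contra! hle
  refine h.not_ge (luxNorm_le_ofReal (by positivity) ?_)
  rw [ENNReal.div_le_iff hW0 hWtop, one_mul]
  calc ∫⁻ z in Qbox a b, ENNReal.ofReal (Φ (‖f z‖ / (2 * t)) * ω z) ∂(Vm α)
      ≤ ∫⁻ z in Qbox a b, 2⁻¹ * T z + 2⁻¹ * ENNReal.ofReal (ω z) ∂(Vm α) := lintegral_mono hpt
    _ = 2⁻¹ * ∫⁻ z in Qbox a b, T z ∂(Vm α) + 2⁻¹ * wvol α ω (Qbox a b) := by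
        rw [lintegral_add_left (hT.const_mul _), lintegral_const_mul _ hT,
          lintegral_const_mul _ hω.1.ennreal_ofReal, wvol]
    _ ≤ 2⁻¹ * wvol α ω (Qbox a b) + 2⁻¹ * wvol α ω (Qbox a b) := by gcongr
    _ = wvol α ω (Qbox a b) := by rw [← add_mul, ENNReal.inv_two_add_inv_two, one_mul]

end Luxemburg

section MaximalFunctions

variable {α β : ℝ} {Φ : ℝ → ℝ} {ω : ℂ → ℝ} {f : ℂ → ℂ} {μ : Measure ℂ}

/-- The measure `ω dV_α`. -/
def weightedVm (α : ℝ) (ω : ℂ → ℝ) : Measure ℂ :=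
  (Vm α).withDensity fun z => ENNReal.ofReal (ω z)

lemma weightedVm_apply {E : Set ℂ} (hE : MeasurableSet E) : weightedVm α ω E = wvol α ω E :=
  withDensity_apply _ hE

lemma lintegral_weightedVm (hω : Measurable ω) {g : ℂ → ℝ≥0∞} (hg : Measurable g) :
    ∫⁻ z, g z ∂weightedVm α ω = ∫⁻ z, g z * ENNReal.ofReal (ω z) ∂(Vm α) := by
  rw [weightedVm, lintegral_withDensity_eq_lintegral_mul _ hω.ennreal_ofReal hg]
  simp only [Pi.mul_apply, mul_comm]

lemma lowerSemicontinuous_iSup_mem_Qbox (a b : ℝ) (c : ℝ≥0∞) :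
    LowerSemicontinuous fun z => ⨆ _ : z ∈ Qbox a b, c := by
  classical
  convert (isOpen_Qbox a b).lowerSemicontinuous_indicator (zero_le (a := c)) using 1
  ext z
  simp [iSup_eq_if, indicator_apply]

lemma measurable_Kmu : Measurable (Kmu α ω μ) :=
  (lowerSemicontinuous_iSup fun a => lowerSemicontinuous_iSup fun b =>
    lowerSemicontinuous_iSup_mem_Qbox a b _).measurable

lemma measurable_dyadicMax : Measurable (dyadicMax β α Φ ω f) :=
  (lowerSemicontinuous_iSup fun _ => lowerSemicontinuous_iSup fun _ =>
    lowerSemicontinuous_iSup_mem_Qbox _ _ _).measurable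

lemma div_wvol_le_Kmu {a b : ℝ} {z : ℂ} (hz : z ∈ Qbox a b) :
    μ (Qbox a b) / wvol α ω (Qbox a b) ≤ Kmu α ω μ z :=
  le_iSup₂_of_le a b (le_iSup_of_le hz le_rfl)

lemma measure_Qbox_le_setLIntegral_Kmu {a b : ℝ} (hW0 : wvol α ω (Qbox a b) ≠ 0)
    (hWtop : wvol α ω (Qbox a b) ≠ ⊤) :
    μ (Qbox a b) ≤ ∫⁻ z in Qbox a b, Kmu α ω μ z ∂weightedVm α ω :=
  calc μ (Qbox a b) = μ (Qbox a b) / wvol α ω (Qbox a b) * wvol α ω (Qbox a b) :=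
        (ENNReal.div_mul_cancel hW0 hWtop).symm
    _ = ∫⁻ _ in Qbox a b, μ (Qbox a b) / wvol α ω (Qbox a b) ∂weightedVm α ω := by
        rw [setLIntegral_const, weightedVm_apply (measurableSet_Qbox a b)]
    _ ≤ ∫⁻ z in Qbox a b, Kmu α ω μ z ∂weightedVm α ω :=
        setLIntegral_mono' (measurableSet_Qbox a b) fun _ => div_wvol_le_Kmu

lemma setOf_lt_dyadicMax (c : ℝ≥0∞) :
    {z | c < dyadicMax β α Φ ω f z} = ⋃ P ∈ {P : ℤ × ℤ |
      c < luxNorm α Φ ω (dyadicLeft β P.1 P.2) (dyadicRight β P.1 P.2) f}, dyadicBox β P := by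
  ext z
  simp only [dyadicMax, dyadicGrid_eq_range, iSup_range, mem_ofPred_eq, mem_iUnion, lt_iSup_iff,
    exists_prop, dyadicBox, and_comm]

end MaximalFunctions

section DyadicLayerCake

lemma two_zpow_rpow (k : ℤ) (e : ℝ) : ((2 : ℝ≥0∞) ^ k) ^ e = (2 ^ e) ^ k := by
  rw [← ENNReal.rpow_intCast, ← ENNReal.rpow_intCast, ← ENNReal.rpow_mul, ← ENNReal.rpow_mul,
    mul_comm]

lemma two_rpow_ne_top (e : ℝ) : (2 : ℝ≥0∞) ^ e ≠ ⊤ :=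
  ENNReal.rpow_ne_top_of_ne_zero two_ne_zero ENNReal.ofNat_ne_top

lemma one_sub_two_rpow_neg_inv_ne_top {e : ℝ} (he : 0 < e) : (1 - (2 : ℝ≥0∞) ^ (-e))⁻¹ ≠ ⊤ := by
  rw [ne_eq, ENNReal.inv_eq_top, tsub_eq_zero_iff_le, not_le, ENNReal.rpow_neg]
  exact ENNReal.inv_lt_one.2 (ENNReal.one_lt_rpow (by norm_num) he)

lemma rpow_le_two_rpow_mul_tsum {e : ℝ} (he : 0 < e) (x : ℝ≥0∞) :
    x ^ e ≤ 2 ^ e * ∑' k : ℤ, if (2 : ℝ≥0∞) ^ k < x then ((2 : ℝ≥0∞) ^ k) ^ e else 0 := by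
  rcases eq_or_ne x 0 with rfl | hx0
  · simp [ENNReal.zero_rpow_of_pos he]
  rcases eq_or_ne x ⊤ with rfl | hxtop
  · suffices (∑' k : ℤ, if (2 : ℝ≥0∞) ^ k < ⊤ then ((2 : ℝ≥0∞) ^ k) ^ e else 0) = ⊤ by
      simp [this, ENNReal.mul_top (ENNReal.rpow_pos two_pos ENNReal.ofNat_ne_top).ne']
    refine eq_top_mono (ENNReal.tsum_comp_le_tsum_of_injective Nat.cast_injective _) ?_
    have hlt (k : ℤ) : (2 : ℝ≥0∞) ^ k < ⊤ := ENNReal.zpow_lt_top two_ne_zero ENNReal.ofNat_ne_top k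
    have hpow (n : ℕ) : ((2 : ℝ≥0∞) ^ (n : ℤ)) ^ e = (2 ^ e) ^ n := by
      rw [two_zpow_rpow, zpow_natCast]
    simp only [hlt, if_true, hpow, ENNReal.tsum_geometric,
      tsub_eq_zero_of_le (ENNReal.one_le_rpow one_le_two he), ENNReal.inv_zero]
  obtain ⟨k, hk, hk'⟩ :=
    ENNReal.exists_mem_Ioc_zpow (y := 2) hx0 hxtop (by norm_num) ENNReal.ofNat_ne_top
  calc x ^ e ≤ ((2 : ℝ≥0∞) ^ (k + 1)) ^ e := ENNReal.rpow_le_rpow hk' he.le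
    _ = 2 ^ e * ((2 : ℝ≥0∞) ^ k) ^ e := by
        rw [ENNReal.zpow_add two_ne_zero ENNReal.ofNat_ne_top, zpow_one,
          ENNReal.mul_rpow_of_nonneg _ _ he.le, mul_comm]
    _ ≤ _ := by
        refine mul_le_mul_right ?_ _
        convert ENNReal.le_tsum (f := fun k : ℤ =>
          if (2 : ℝ≥0∞) ^ k < x then ((2 : ℝ≥0∞) ^ k) ^ e else 0) k
        exact (if_pos hk).symm

lemma tsum_two_zpow_rpow_le {e : ℝ} (he : 0 < e) (x : ℝ≥0∞) :
    (∑' k : ℤ, if (2 : ℝ≥0∞) ^ k < x then ((2 : ℝ≥0∞) ^ k) ^ e else 0) ≤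
      (1 - 2 ^ (-e))⁻¹ * x ^ e := by
  rcases eq_or_ne x 0 with rfl | hx0
  · simp
  rcases eq_or_ne x ⊤ with rfl | hxtop
  · rw [ENNReal.top_rpow_of_pos he, ENNReal.mul_top (by simp)]
    exact le_top
  obtain ⟨k₀, hk₀, hk₀'⟩ :=
    ENNReal.exists_mem_Ioc_zpow (y := 2) hx0 hxtop (by norm_num) ENNReal.ofNat_ne_top
  have hsupp (k : ℤ) (hk : (2 : ℝ≥0∞) ^ k < x) : k ≤ k₀ := by
    by_contra! h
    exact (hk₀'.trans (ENNReal.zpow_le_of_le one_le_two h)).not_gt hk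
  calc (∑' k : ℤ, if (2 : ℝ≥0∞) ^ k < x then ((2 : ℝ≥0∞) ^ k) ^ e else 0)
      ≤ ∑' k : ℤ, if k ≤ k₀ then ((2 : ℝ≥0∞) ^ k) ^ e else 0 :=
        ENNReal.tsum_le_tsum fun k => by
          by_cases h : (2 : ℝ≥0∞) ^ k < x
          · rw [if_pos h, if_pos (hsupp k h)]
          · rw [if_neg h]; exact zero_le
    _ = ∑' n : ℕ, ((2 : ℝ≥0∞) ^ (k₀ - n)) ^ e := by
        rw [← Function.Injective.tsum_eq (g := fun n : ℕ => k₀ - n)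
          (fun n n' h => by simpa using h)]
        · exact tsum_congr fun n => if_pos (by omega)
        · intro k hk
          refine ⟨(k₀ - k).toNat, show k₀ - ((k₀ - k).toNat : ℤ) = k from ?_⟩
          by_contra h
          exact hk (if_neg (by omega))
    _ = ((2 : ℝ≥0∞) ^ k₀) ^ e * ∑' n : ℕ, (2 ^ (-e)) ^ n := by
        rw [← ENNReal.tsum_mul_left]
        refine tsum_congr fun n => ?_
        rw [two_zpow_rpow, two_zpow_rpow, ENNReal.zpow_sub (ENNReal.rpow_pos two_pos
          ENNReal.ofNat_ne_top).ne' (two_rpow_ne_top e), zpow_natCast,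
          ENNReal.rpow_neg, ENNReal.inv_pow]
    _ ≤ x ^ e * (1 - 2 ^ (-e))⁻¹ := by
        rw [ENNReal.tsum_geometric]
        exact mul_le_mul_left (ENNReal.rpow_le_rpow hk₀.le he.le) _
    _ = (1 - 2 ^ (-e))⁻¹ * x ^ e := mul_comm _ _

variable {X : Type*} [MeasurableSpace X] (m : Measure X) {F : X → ℝ≥0∞} {e : ℝ}

lemma lintegral_rpow_le_tsum (hF : Measurable F) (he : 0 < e) :
    ∫⁻ x, F x ^ e ∂m ≤ 2 ^ e * ∑' k : ℤ, ((2 : ℝ≥0∞) ^ k) ^ e * m {x | 2 ^ k < F x} := by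
  have hE (k : ℤ) : MeasurableSet {x | (2 : ℝ≥0∞) ^ k < F x} := measurableSet_lt measurable_const hF
  calc ∫⁻ x, F x ^ e ∂m
      ≤ ∫⁻ x, 2 ^ e * ∑' k : ℤ, (if 2 ^ k < F x then ((2 : ℝ≥0∞) ^ k) ^ e else 0) ∂m :=
        lintegral_mono fun x => rpow_le_two_rpow_mul_tsum he (F x)
    _ = 2 ^ e * ∑' k : ℤ, ((2 : ℝ≥0∞) ^ k) ^ e * m {x | 2 ^ k < F x} := by
        rw [lintegral_const_mul' _ _ (two_rpow_ne_top e),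
          lintegral_tsum fun k =>
            (Measurable.ite (hE k) measurable_const measurable_const).aemeasurable]
        simp only [← lintegral_indicator_const (hE _), indicator_apply, mem_ofPred_eq]

lemma tsum_mul_setLIntegral_le (hF : Measurable F) {G : X → ℝ≥0∞} (hG : Measurable G)
    (he : 0 < e) :
    ∑' k : ℤ, ((2 : ℝ≥0∞) ^ k) ^ e * ∫⁻ x in {x | 2 ^ k < F x}, G x ∂m ≤
      (1 - 2 ^ (-e))⁻¹ * ∫⁻ x, F x ^ e * G x ∂m := by
  have hE (k : ℤ) : MeasurableSet {x | (2 : ℝ≥0∞) ^ k < F x} := measurableSet_lt measurable_const hF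
  calc ∑' k : ℤ, ((2 : ℝ≥0∞) ^ k) ^ e * ∫⁻ x in {x | 2 ^ k < F x}, G x ∂m
      = ∫⁻ x, (∑' k : ℤ, if 2 ^ k < F x then ((2 : ℝ≥0∞) ^ k) ^ e else 0) * G x ∂m := by
        simp only [← ENNReal.tsum_mul_right, ite_mul, zero_mul]
        rw [lintegral_tsum fun k =>
          (Measurable.ite (hE k) (hG.const_mul _) measurable_const).aemeasurable]
        refine tsum_congr fun k => ?_
        rw [← lintegral_const_mul _ hG, ← lintegral_indicator (hE k)]
        simp only [indicator_apply, mem_ofPred_eq]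
    _ ≤ ∫⁻ x, (1 - 2 ^ (-e))⁻¹ * F x ^ e * G x ∂m :=
        lintegral_mono fun x => mul_le_mul_left (tsum_two_zpow_rpow_le he (F x)) _
    _ = (1 - 2 ^ (-e))⁻¹ * ∫⁻ x, F x ^ e * G x ∂m := by
        simp only [mul_assoc]
        exact lintegral_const_mul' _ _ (one_sub_two_rpow_neg_inv_ne_top he)

end DyadicLayerCake

section YoungSum

variable {Φ : ℝ → ℝ} {p : ℝ}

lemma ENNReal.ofReal_two_zpow (k : ℤ) : ENNReal.ofReal ((2 : ℝ) ^ k) = 2 ^ k := by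
  rw [← ENNReal.rpow_intCast, ← ENNReal.ofReal_ofNat 2, ENNReal.ofReal_rpow_of_pos two_pos,
    Real.rpow_intCast]

lemma two_mul_two_zpow_sub_one (k : ℤ) : 2 * (2 : ℝ) ^ (k - 1) = 2 ^ k := by
  rw [mul_comm, ← zpow_add_one₀ two_ne_zero, sub_add_cancel]

lemma IsNormalizedYoung.ofReal_le_mul_setLIntegral (hΦ : IsNormalizedYoung Φ) (hp : -1 ≤ p)
    {T : ℝ} (hT : 0 < T) :
    ENNReal.ofReal (Φ T) ≤ ENNReal.ofReal (2 ^ (p + 1) * T ^ p) *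
      ∫⁻ t in Ioc T (2 * T), ENNReal.ofReal (Φ t / t ^ (p + 1)) := by
  have hΦT := hΦ.nonneg hT.le
  calc ENNReal.ofReal (Φ T)
      = ENNReal.ofReal (2 ^ (p + 1) * T ^ p) *
          (ENNReal.ofReal (Φ T / (2 * T) ^ (p + 1)) * volume (Ioc T (2 * T))) := by
        rw [Real.volume_Ioc, ← ENNReal.ofReal_mul (by positivity),
          ← ENNReal.ofReal_mul (by positivity)]
        congr 1
        rw [Real.mul_rpow zero_le_two hT.le, Real.rpow_add_one hT.ne']
        field_simp
        ring
    _ ≤ _ := by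
        rw [← setLIntegral_const]
        refine mul_le_mul_right (setLIntegral_mono' measurableSet_Ioc fun t ht => ?_) _
        have ht0 : 0 < t := hT.trans ht.1
        exact ENNReal.ofReal_le_ofReal (div_le_div₀ (hΦ.nonneg ht0.le)
          (hΦ.mono (mem_Ici.2 hT.le) (mem_Ici.2 ht0.le) ht.1.le) (by positivity)
          (Real.rpow_le_rpow ht0.le ht.2 (by linarith)))

lemma IsNormalizedYoung.ofReal_rpow_mul_le (hΦ : IsNormalizedYoung Φ) (hp : -1 ≤ p) {c u : ℝ}
    (hc : 0 < c) (hu : 0 < u) :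
    ENNReal.ofReal ((2 * c) ^ p) * ENNReal.ofReal (Φ (u / c)) ≤
      2 ^ (2 * p + 1) * ENNReal.ofReal u ^ p *
        ∫⁻ t in Ioc (u / c) (2 * (u / c)), ENNReal.ofReal (Φ t / t ^ (p + 1)) := by
  have hconst : ENNReal.ofReal ((2 * c) ^ p) * ENNReal.ofReal (2 ^ (p + 1) * (u / c) ^ p) =
      2 ^ (2 * p + 1) * ENNReal.ofReal u ^ p := by
    rw [← ENNReal.ofReal_mul (by positivity), ← ENNReal.ofReal_ofNat 2,
      ENNReal.ofReal_rpow_of_pos two_pos, ENNReal.ofReal_rpow_of_pos hu,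
      ← ENNReal.ofReal_mul (by positivity)]
    congr 1
    rw [Real.mul_rpow zero_le_two hc.le, Real.div_rpow hu.le hc.le,
      show 2 * p + 1 = p + (p + 1) by ring, Real.rpow_add two_pos p (p + 1)]
    field_simp
  rw [← hconst, mul_assoc]
  exact mul_le_mul_right (hΦ.ofReal_le_mul_setLIntegral hp (div_pos hu hc)) _

lemma pairwise_disjoint_Ioc_div_two_zpow (u : ℝ) (hu : 0 ≤ u) :
    Pairwise (Function.onFun Disjoint fun j : ℤ => Ioc (u / 2 ^ j) (2 * (u / 2 ^ j))) := by
  have key {i j : ℤ} (hij : i < j) : Disjoint (Ioc (u / 2 ^ j) (2 * (u / 2 ^ j)))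
      (Ioc (u / 2 ^ i) (2 * (u / 2 ^ i))) := by
    refine Ioc_disjoint_Ioc_of_le ?_
    have : (2 : ℝ) ^ (i + 1) ≤ 2 ^ j := zpow_le_zpow_right₀ one_le_two (by omega)
    rw [zpow_add_one₀ two_ne_zero] at this
    rw [← mul_div_assoc, div_le_div_iff₀ (by positivity) (by positivity)]
    nlinarith [zpow_pos (two_pos (α := ℝ)) i]
  intro i j hij
  rcases hij.lt_or_gt with h | h
  · exact (key h).symm
  · exact key h

lemma IsNormalizedYoung.tsum_mul_truncation_le (hΦ : IsNormalizedYoung Φ) (hp : -1 ≤ p) {u : ℝ}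
    (hu : 0 ≤ u) :
    ∑' k : ℤ, ((2 : ℝ≥0∞) ^ k) ^ p *
        ENNReal.ofReal (Φ ((if (2 : ℝ) ^ (k - 1) < u then u else 0) / 2 ^ (k - 1))) ≤
      2 ^ (2 * p + 1) * (∫⁻ t in Ioi 1, ENNReal.ofReal (Φ t / t ^ (p + 1))) *
        ENNReal.ofReal u ^ p := by
  set g : ℝ → ℝ≥0∞ := fun t => ENNReal.ofReal (Φ t / t ^ (p + 1))
  set S := {k : ℤ | (2 : ℝ) ^ (k - 1) < u}
  set B : ℤ → Set ℝ := fun k => Ioc (u / 2 ^ (k - 1)) (2 * (u / 2 ^ (k - 1)))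
  have hterm (k : ℤ) : ((2 : ℝ≥0∞) ^ k) ^ p *
      ENNReal.ofReal (Φ ((if (2 : ℝ) ^ (k - 1) < u then u else 0) / 2 ^ (k - 1))) ≤
      2 ^ (2 * p + 1) * ENNReal.ofReal u ^ p * S.indicator (fun k => ∫⁻ t in B k, g t) k := by
    by_cases hk : (2 : ℝ) ^ (k - 1) < u
    · rw [if_pos hk, indicator_of_mem (show k ∈ S from hk), ← ENNReal.ofReal_two_zpow,
        ENNReal.ofReal_rpow_of_pos (zpow_pos two_pos k), ← two_mul_two_zpow_sub_one]
      exact hΦ.ofReal_rpow_mul_le hp (zpow_pos two_pos _) ((zpow_pos two_pos _).trans hk)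
    · rw [if_neg hk, indicator_of_notMem (show k ∉ S from hk), zero_div, hΦ.map_zero]
      simp
  have hdisj : Pairwise (Function.onFun Disjoint fun k : S => B k) :=
    (pairwise_disjoint_Ioc_div_two_zpow u hu).comp_of_injective
      fun i j h => Subtype.ext (by simpa using h)
  have hB : ⋃ k : S, B k ⊆ Ioi 1 := iUnion_subset fun k t ht =>
    ((one_lt_div (zpow_pos two_pos _)).2 k.2).trans ht.1
  calc _ ≤ ∑' k : ℤ, 2 ^ (2 * p + 1) * ENNReal.ofReal u ^ p *
        S.indicator (fun k => ∫⁻ t in B k, g t) k := ENNReal.tsum_le_tsum hterm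
    _ = 2 ^ (2 * p + 1) * ENNReal.ofReal u ^ p * ∫⁻ t in ⋃ k : S, B k, g t := by
        rw [ENNReal.tsum_mul_left, ← tsum_subtype,
          lintegral_iUnion (fun _ => measurableSet_Ioc) hdisj]
    _ ≤ 2 ^ (2 * p + 1) * ENNReal.ofReal u ^ p * ∫⁻ t in Ioi 1, g t :=
        mul_le_mul_right (lintegral_mono_set hB) _
    _ = _ := mul_right_comm _ _ _

end YoungSum

section MainEstimates

lemma lintegral_rpow_mul_le {X : Type*} [MeasurableSpace X] (ν : Measure X) {F K : X → ℝ≥0∞}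
    (hF : Measurable F) (hK : Measurable K) {p q : ℝ} (hq : 0 < q) (hqp : q < p) :
    ∫⁻ x, F x ^ q * K x ∂ν ≤
      (∫⁻ x, F x ^ p ∂ν) ^ (q / p) * (∫⁻ x, K x ^ (p / (p - q)) ∂ν) ^ ((p - q) / p) := by
  have hp : 0 < p := hq.trans hqp
  have hconj : (p / q).HolderConjugate (p / (p - q)) := by
    refine Real.holderConjugate_iff.2 ⟨(one_lt_div hq).2 hqp, ?_⟩
    field_simp
    ring
  have := ENNReal.lintegral_mul_le_Lp_mul_Lq ν hconj (hF.pow_const q).aemeasurable hK.aemeasurable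
  simp only [Pi.mul_apply, ← ENNReal.rpow_mul, mul_div_cancel₀ p hq.ne', one_div_div] at this
  exact this

variable {α β p q : ℝ} {Φ : ℝ → ℝ} {ω : ℂ → ℝ} {f : ℂ → ℂ} {μ : Measure ℂ}

lemma measure_setOf_lt_dyadicMax_le (hβ : ∃ d : ℤ, (d : ℝ) = 3 * β) (hω : IsWeight α ω) (k : ℤ) :
    μ {z | 2 ^ k < dyadicMax β α Φ ω f z} ≤
      ∫⁻ z in {z | 2 ^ k < dyadicMax β α Φ ω f z}, Kmu α ω μ z ∂weightedVm α ω := by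
  rw [setOf_lt_dyadicMax]
  refine measure_biUnion_dyadicBox_le hβ fun P hP => ?_
  rw [mem_ofPred_eq, ← ENNReal.ofReal_two_zpow] at hP
  obtain ⟨hW0, hWtop, -⟩ := wvol_lt_of_ofReal_lt_luxNorm hω (zpow_pos two_pos k) hP
  exact measure_Qbox_le_setLIntegral_Kmu hW0 hWtop

lemma weightedVm_setOf_lt_dyadicMax_le (hβ : ∃ d : ℤ, (d : ℝ) = 3 * β) (hω : IsWeight α ω)
    (hΦ : IsNormalizedYoung Φ) (hf : Measurable f) (k : ℤ) :
    weightedVm α ω {z | 2 ^ k < dyadicMax β α Φ ω f z} ≤ ∫⁻ z,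
      ENNReal.ofReal (Φ ((if (2 : ℝ) ^ (k - 1) < ‖f z‖ then ‖f z‖ else 0) / 2 ^ (k - 1)) * ω z)
        ∂(Vm α) := by
  rw [setOf_lt_dyadicMax]
  refine (measure_biUnion_dyadicBox_le hβ fun P hP => ?_).trans (setLIntegral_le_lintegral _ _)
  rw [mem_ofPred_eq, ← ENNReal.ofReal_two_zpow, ← two_mul_two_zpow_sub_one] at hP
  rw [weightedVm_apply (E := dyadicBox β P) (measurableSet_Qbox _ _)]
  exact (wvol_lt_truncation_of_ofReal_two_mul_lt_luxNorm hω hΦ hf (zpow_pos two_pos _) hP).le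

lemma lintegral_dyadicMax_rpow_le_lpInt (hβ : ∃ d : ℤ, (d : ℝ) = 3 * β) (hω : IsWeight α ω)
    (hΦ : IsNormalizedYoung Φ) (hp : 0 < p) (hf : Measurable f) :
    ∫⁻ z, dyadicMax β α Φ ω f z ^ p ∂weightedVm α ω ≤
      2 ^ p * (2 ^ (2 * p + 1) * ∫⁻ t in Ioi 1, ENNReal.ofReal (Φ t / t ^ (p + 1))) *
        lpInt α p ω f := by
  set A := ∫⁻ t in Ioi 1, ENNReal.ofReal (Φ t / t ^ (p + 1))
  set G : ℤ → ℂ → ℝ≥0∞ := fun k z =>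
    ENNReal.ofReal (Φ ((if (2 : ℝ) ^ (k - 1) < ‖f z‖ then ‖f z‖ else 0) / 2 ^ (k - 1)))
  have hG (k : ℤ) : Measurable fun z => G k z * ENNReal.ofReal (ω z) :=
    (hΦ.measurable_truncation hf (zpow_pos two_pos _).le).ennreal_ofReal.mul hω.1.ennreal_ofReal
  have hfp : Measurable fun z => ENNReal.ofReal ‖f z‖ ^ p * ENNReal.ofReal (ω z) :=
    (hf.norm.ennreal_ofReal.pow_const p).mul hω.1.ennreal_ofReal
  have hGω (k : ℤ) (z : ℂ) : ENNReal.ofReal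
      (Φ ((if (2 : ℝ) ^ (k - 1) < ‖f z‖ then ‖f z‖ else 0) / 2 ^ (k - 1)) * ω z) =
      G k z * ENNReal.ofReal (ω z) :=
    ENNReal.ofReal_mul (hΦ.nonneg (by split_ifs <;> positivity))
  calc ∫⁻ z, dyadicMax β α Φ ω f z ^ p ∂weightedVm α ω
      ≤ 2 ^ p * ∑' k : ℤ, ((2 : ℝ≥0∞) ^ k) ^ p *
          weightedVm α ω {z | 2 ^ k < dyadicMax β α Φ ω f z} :=
        lintegral_rpow_le_tsum _ measurable_dyadicMax hp
    _ ≤ 2 ^ p * ∑' k : ℤ, ((2 : ℝ≥0∞) ^ k) ^ p * ∫⁻ z, G k z * ENNReal.ofReal (ω z) ∂(Vm α) := by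
        simp only [← hGω]
        exact mul_le_mul_right (ENNReal.tsum_le_tsum fun k => mul_le_mul_right
          (weightedVm_setOf_lt_dyadicMax_le hβ hω hΦ hf k) _) _
    _ = 2 ^ p * ∫⁻ z, (∑' k : ℤ, ((2 : ℝ≥0∞) ^ k) ^ p * G k z) * ENNReal.ofReal (ω z) ∂(Vm α) := by
        congr 1
        simp only [← ENNReal.tsum_mul_right, mul_assoc]
        rw [lintegral_tsum fun k => ((hG k).const_mul _).aemeasurable]
        exact tsum_congr fun k => (lintegral_const_mul _ (hG k)).symm
    _ ≤ 2 ^ p * ∫⁻ z, 2 ^ (2 * p + 1) * A *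
          (ENNReal.ofReal ‖f z‖ ^ p * ENNReal.ofReal (ω z)) ∂(Vm α) := by
        refine mul_le_mul_right (lintegral_mono fun z => ?_) _
        rw [← mul_assoc]
        exact mul_le_mul_left (hΦ.tsum_mul_truncation_le (by linarith) (norm_nonneg _)) _
    _ = 2 ^ p * (2 ^ (2 * p + 1) * A) * lpInt α p ω f := by
        rw [lintegral_const_mul _ hfp, lpInt]
        ring

lemma lintegral_dyadicMax_rpow_le_Kmu (hβ : ∃ d : ℤ, (d : ℝ) = 3 * β) (hω : IsWeight α ω)
    (hq : 0 < q) :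
    ∫⁻ z, dyadicMax β α Φ ω f z ^ q ∂μ ≤ 2 ^ q * ((1 - 2 ^ (-q))⁻¹ *
      ∫⁻ z, dyadicMax β α Φ ω f z ^ q * Kmu α ω μ z ∂weightedVm α ω) :=
  (lintegral_rpow_le_tsum μ measurable_dyadicMax hq).trans <| mul_le_mul_right
    ((ENNReal.tsum_le_tsum fun k =>
      mul_le_mul_right (measure_setOf_lt_dyadicMax_le hβ hω k) _).trans
      (tsum_mul_setLIntegral_le _ measurable_dyadicMax measurable_Kmu hq)) _

def embeddingConst (α p q : ℝ) (Φ : ℝ → ℝ) (ω : ℂ → ℝ) (μ : Measure ℂ) : ℝ≥0∞ :=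
  (2 ^ q * (1 - 2 ^ (-q))⁻¹ *
    (∫⁻ z, Kmu α ω μ z ^ (p / (p - q)) ∂weightedVm α ω) ^ ((p - q) / p) *
    (2 ^ p * (2 ^ (2 * p + 1) * ∫⁻ t in Ioi 1, ENNReal.ofReal (Φ t / t ^ (p + 1)))) ^ (q / p)) ^
    (1 / q)

lemma embeddingConst_ne_top {α p q : ℝ} {Φ : ℝ → ℝ} {ω : ℂ → ℝ} {μ : Measure ℂ} (hω : IsWeight α ω)
    (hΦ : IsNormalizedYoung Φ) (hΦp : InBp Φ p) (hq : 0 < q) (hqp : q < p)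
    (hK : ∫⁻ z, Kmu α ω μ z ^ (p / (p - q)) * ENNReal.ofReal (ω z) ∂(Vm α) < ⊤) :
    embeddingConst α p q Φ ω μ ≠ ⊤ := by
  have hA := hΦ.lintegral_Ioi_one_lt_top (by linarith) hΦp
  rw [← lintegral_weightedVm hω.1 (measurable_Kmu.pow_const _)] at hK
  have hp : 0 < p := hq.trans hqp
  refine ENNReal.rpow_ne_top_of_nonneg (by positivity) (ENNReal.mul_ne_top (ENNReal.mul_ne_top
    (ENNReal.mul_ne_top (two_rpow_ne_top q) (one_sub_two_rpow_neg_inv_ne_top hq))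
    (ENNReal.rpow_ne_top_of_nonneg (div_nonneg (by linarith) hp.le) hK.ne))
    (ENNReal.rpow_ne_top_of_nonneg (by positivity) ?_))
  exact ENNReal.mul_ne_top (two_rpow_ne_top p) (ENNReal.mul_ne_top (two_rpow_ne_top _) hA.ne)

lemma lintegral_dyadicMax_rpow_le (hβ : ∃ d : ℤ, (d : ℝ) = 3 * β) (hω : IsWeight α ω)
    (hΦ : IsNormalizedYoung Φ) (hq : 0 < q) (hqp : q < p) (hf : Measurable f) :
    (∫⁻ z, dyadicMax β α Φ ω f z ^ q ∂μ) ^ (1 / q) ≤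
      embeddingConst α p q Φ ω μ * lpInt α p ω f ^ (1 / p) := by
  have hp : 0 < p := hq.trans hqp
  set M := dyadicMax β α Φ ω f
  set KS := ∫⁻ z, Kmu α ω μ z ^ (p / (p - q)) ∂weightedVm α ω
  set CP := 2 ^ p * (2 ^ (2 * p + 1) * ∫⁻ t in Ioi 1, ENNReal.ofReal (Φ t / t ^ (p + 1)))
  have hMq : ∫⁻ z, M z ^ q ∂μ ≤
      2 ^ q * (1 - 2 ^ (-q))⁻¹ * KS ^ ((p - q) / p) * CP ^ (q / p) * lpInt α p ω f ^ (q / p) :=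
    calc ∫⁻ z, M z ^ q ∂μ
        ≤ 2 ^ q * ((1 - 2 ^ (-q))⁻¹ * ∫⁻ z, M z ^ q * Kmu α ω μ z ∂weightedVm α ω) :=
          lintegral_dyadicMax_rpow_le_Kmu hβ hω hq
      _ ≤ 2 ^ q * ((1 - 2 ^ (-q))⁻¹ *
            ((∫⁻ z, M z ^ p ∂weightedVm α ω) ^ (q / p) * KS ^ ((p - q) / p))) := by
          gcongr
          exact lintegral_rpow_mul_le _ measurable_dyadicMax measurable_Kmu hq hqp
      _ ≤ 2 ^ q * ((1 - 2 ^ (-q))⁻¹ * ((CP * lpInt α p ω f) ^ (q / p) * KS ^ ((p - q) / p))) := by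
          gcongr
          exact lintegral_dyadicMax_rpow_le_lpInt hβ hω hΦ hp hf
      _ = _ := by
          rw [ENNReal.mul_rpow_of_nonneg _ _ (by positivity)]
          ring
  calc (∫⁻ z, M z ^ q ∂μ) ^ (1 / q)
      ≤ (2 ^ q * (1 - 2 ^ (-q))⁻¹ * KS ^ ((p - q) / p) * CP ^ (q / p) *
          lpInt α p ω f ^ (q / p)) ^ (1 / q) := ENNReal.rpow_le_rpow hMq (by positivity)
    _ = embeddingConst α p q Φ ω μ * lpInt α p ω f ^ (1 / p) := by
        rw [ENNReal.mul_rpow_of_nonneg _ _ (by positivity), ← ENNReal.rpow_mul, embeddingConst]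
        congr 2
        field_simp

end MainEstimates

end

theorem statement16_general (α p q : ℝ) (hq : 1 < q) (hqp : q < p)
    (ω : ℂ → ℝ) (hω : IsWeight α ω)
    (μ : Measure ℂ)
    (Φ : ℝ → ℝ) (hΦ : IsNormalizedYoung Φ) (hΦp : InBp Φ p)
    (hK : (∫⁻ z, (Kmu α ω μ z) ^ (p / (p - q)) * ENNReal.ofReal (ω z) ∂(Vm α)) < ⊤) :
    ∃ C : ℝ, 0 < C ∧ ∀ β ∈ ({0, 1/3} : Set ℝ), ∀ f : ℂ → ℂ,
      Measurable f → HasCompactSupport f → lpInt α p ω f < ⊤ →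
      (∫⁻ z, (dyadicMax β α Φ ω f z) ^ q ∂μ) ^ (1 / q)
        ≤ ENNReal.ofReal C * (lpInt α p ω f) ^ (1 / p) := by
  have hq0 : 0 < q := by linarith
  have hC := embeddingConst_ne_top hω hΦ hΦp hq0 hqp hK
  refine ⟨(embeddingConst α p q Φ ω μ).toReal + 1, by positivity, fun β hβ f hf _ _ => ?_⟩
  have hβ3 : ∃ d : ℤ, (d : ℝ) = 3 * β := by
    rcases hβ with rfl | rfl
    · exact ⟨0, by norm_num⟩
    · exact ⟨1, by norm_num⟩
  refine (lintegral_dyadicMax_rpow_le hβ3 hω hΦ hq0 hqp hf).trans (mul_le_mul_left ?_ _)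
  exact (ENNReal.le_ofReal_iff_toReal_le hC (by positivity)).2 (by linarith)

/-- Lemma 3.1: for `1 < q < p < ∞`, `ω ∈ 𝔹_{∞,α}`, `Φ ∈ B_p`,
if `K_μ ∈ L^s(H, ω dV_α)` with `s = p/(p-q)`, then for `β ∈ {0, 1/3}`,
`(∫ (M^{d,β}_{Φ,ω,α} f)^q dμ)^{1/q} ≤ C (∫ |f|^p ω dV_α)^{1/p}`. -/
theorem statement16 (α p q : ℝ) (hα : -1 < α) (hq : 1 < q) (hqp : q < p)
    (ω : ℂ → ℝ) (hω : IsWeight α ω) (hωB : InBBinfty α ω)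
    (μ : Measure ℂ) (hμ : μ UHPᶜ = 0)
    (Φ : ℝ → ℝ) (hΦ : IsNormalizedYoung Φ) (hΦp : InBp Φ p)
    (hK : (∫⁻ z, (Kmu α ω μ z) ^ (p / (p - q)) * ENNReal.ofReal (ω z) ∂(Vm α)) < ⊤) :
    ∃ C : ℝ, 0 < C ∧ ∀ β ∈ ({0, 1/3} : Set ℝ), ∀ f : ℂ → ℂ,
      Measurable f → HasCompactSupport f → lpInt α p ω f < ⊤ →
      (∫⁻ z, (dyadicMax β α Φ ω f z) ^ q ∂μ) ^ (1 / q)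
        ≤ ENNReal.ofReal C * (lpInt α p ω f) ^ (1 / p) :=
  statement16_general α p q hq hqp ω hω μ Φ hΦ hΦp hK
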